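/- arXiv:1403.1898 — 2 statements merged into one kernel-verified Lean document; each statement's English description precedes it below -/
import Mathlib

section
/- Suppose Π = (P, L) is a Fischer space, i.e., for every x ∈ P the central map t(x) maps lines to lines. Then in the Matsuo algebra M = M(Π, η/2, F), every basis element a_p (p ∈ P) is a primitive axis of Jordan type η; that is: a_p·a_p = a_p; M is the internal direct sum of the eigenspaces M_1(a_p), M_0(a_p), M_η(a_p) of the left-multiplication operator by a_p; M_1(a_p) = F • a_p; M_0(a_p)·M_0(a_p) ⊆ M_0(a_p); and, writing M_+ = M_1(a_p) + M_0(a_p) and M_- = M_η(a_p), one has M_+·M_+ ⊆ M_+, M_+·M_- ⊆ M_-, and M_-·M_- ⊆ M_+. Consequently M is a primitive axial algebra of Jordan type η generated by the axes {a_p : p ∈ P}. -/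
/-!
The central map `t(p)` of a Fischer space is an involution sending lines to lines, so permuting
the basis by it is an algebra automorphism `τ` of the Matsuo algebra. For every line `{p, r, s}`
the vectors `a_r + a_s - η a_p` and `a_r - a_s` are eigenvectors of `a_p` for `0` and `η`, and so
is `a_q` (for `0`) when `q ⊥ p`; together with `a_p` they span `M`, so the three eigenspaces are
the spans of these families and, `1, 0, η` being distinct, `M` is their direct sum. Since `τ`
fixes `a_p`, the `a_q` and the `a_r + a_s - η a_p`, and negates the `a_r - a_s`, the spaces `M_+`
and `M_-` are its `±1`-eigenspaces, which gives the `ℤ/2`-graded part of the fusion law.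
The rule `M_0 M_0 ⊆ M_0` is checked on products of the spanning vectors of `M_0`: the way two
lines through `p` meet other lines in a Fischer space writes each product as a combination of
such vectors.
-/

/-- The `lam`-eigenspace of the left-multiplication operator by `x`. -/
def eigSp (F : Type*) {A : Type*} [Field F] [NonUnitalNonAssocCommRing A] [Module F A]
    [SMulCommClass F A A] (x : A) (lam : F) : Submodule F A where
  carrier := {y | x * y = lam • y}
  add_mem' := by
    intro y z hy hz
    simp only [Set.mem_setOf_eq] at *
    rw [mul_add, hy, hz, smul_add]
  zero_mem' := by simp
  smul_mem' := by
    intro c y hy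
    simp only [Set.mem_setOf_eq] at *
    rw [mul_smul_comm, hy, smul_smul, smul_smul, mul_comm]

/-- Two points are collinear if some line contains both. -/
def Collinear' {P : Type*} (L : Set (Finset P)) (p q : P) : Prop :=
  ∃ l ∈ L, p ∈ l ∧ q ∈ l

/-- `t` is the central map of `Π = (P, L)` with center `x`:  it fixes `x` and every point
not collinear with `x`, and for every line `{x, y, z}` it sends `y` to `z`. -/
def IsCentralMap {P : Type*} [DecidableEq P] (L : Set (Finset P)) (x : P) (t : P → P) :
    Prop :=
  t x = x ∧
  (∀ y : P, y ≠ x → ¬ Collinear' L x y → t y = y) ∧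
  (∀ y z : P, ({x, y, z} : Finset P) ∈ L → t y = z)

structure IsPartialTripleSystem {P : Type*} (L : Set (Finset P)) : Prop where
  card_eq : ∀ l ∈ L, l.card = 3
  eq_of_mem : ∀ l₁ ∈ L, ∀ l₂ ∈ L, ∀ p q : P,
    p ≠ q → p ∈ l₁ → q ∈ l₁ → p ∈ l₂ → q ∈ l₂ → l₁ = l₂

structure IsFischerSpace {P : Type*} [DecidableEq P] (L : Set (Finset P)) : Prop
    extends IsPartialTripleSystem L where
  image_mem : ∀ (x : P) (t : P → P), IsCentralMap L x t → ∀ l ∈ L, l.image t ∈ L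

section Geometry

variable {P : Type*} {L : Set (Finset P)} {x y z w : P}

theorem collinear'_comm : Collinear' L x y ↔ Collinear' L y x :=
  ⟨fun ⟨l, hl, hx, hy⟩ => ⟨l, hl, hy, hx⟩, fun ⟨l, hl, hy, hx⟩ => ⟨l, hl, hx, hy⟩⟩

variable [DecidableEq P]

theorem line_swap₁₂ (h : ({x, y, z} : Finset P) ∈ L) : ({y, x, z} : Finset P) ∈ L := by
  rwa [Finset.insert_comm]

theorem line_swap₂₃ (h : ({x, y, z} : Finset P) ∈ L) : ({x, z, y} : Finset P) ∈ L := by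
  rwa [Finset.pair_comm]

theorem line_rotate (h : ({x, y, z} : Finset P) ∈ L) : ({y, z, x} : Finset P) ∈ L :=
  line_swap₂₃ (line_swap₁₂ h)

theorem collinear'_of_line (h : ({x, y, z} : Finset P) ∈ L) : Collinear' L x y :=
  ⟨_, h, by simp, by simp⟩

theorem collinear'_of_map {σ : P → P} (hσ : ∀ l ∈ L, l.image σ ∈ L)
    (h : Collinear' L x y) : Collinear' L (σ x) (σ y) :=
  let ⟨l, hl, hx, hy⟩ := h
  ⟨_, hσ l hl, Finset.mem_image_of_mem σ hx, Finset.mem_image_of_mem σ hy⟩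

theorem line_map {σ : P → P} (hσ : ∀ l ∈ L, l.image σ ∈ L)
    (h : ({x, y, z} : Finset P) ∈ L) : ({σ x, σ y, σ z} : Finset P) ∈ L := by
  simpa only [Finset.image_insert, Finset.image_singleton] using hσ _ h

open Classical in
noncomputable def centralMap (L : Set (Finset P)) (x y : P) : P :=
  if h : ∃ z, ({x, y, z} : Finset P) ∈ L then h.choose else y

theorem centralMap_of_not_collinear' (h : ¬ Collinear' L x y) : centralMap L x y = y :=
  dif_neg fun ⟨_, hz⟩ => h (collinear'_of_line hz)

namespace IsPartialTripleSystem

variable (hL : IsPartialTripleSystem L)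
include hL

theorem ne_of_line (h : ({x, y, z} : Finset P) ∈ L) : x ≠ y ∧ x ≠ z ∧ y ≠ z := by
  have h3 := hL.card_eq _ h
  refine ⟨?_, ?_, ?_⟩ <;> rintro rfl
  · have := Finset.card_le_two (a := x) (b := z); simp_all
  · have := Finset.card_le_two (a := x) (b := y)
    rw [Finset.pair_comm, Finset.insert_eq_of_mem (by simp)] at h3; omega
  · have := Finset.card_le_two (a := x) (b := y); simp_all

theorem eq_of_line_of_line (h₁ : ({x, y, z} : Finset P) ∈ L)
    (h₂ : ({x, y, w} : Finset P) ∈ L) : z = w := by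
  obtain ⟨hxy, hxz, hyz⟩ := hL.ne_of_line h₁
  have hz : z ∈ ({x, y, w} : Finset P) := by
    rw [← hL.eq_of_mem _ h₁ _ h₂ x y hxy (by simp) (by simp) (by simp) (by simp)]; simp
  simp only [Finset.mem_insert, Finset.mem_singleton] at hz
  exact hz.resolve_left hxz.symm |>.resolve_left hyz.symm

theorem exists_line_of_collinear' (h : Collinear' L x y) (hxy : x ≠ y) :
    ∃ z, ({x, y, z} : Finset P) ∈ L := by
  obtain ⟨l, hl, hx, hy⟩ := h
  have hy' : y ∈ l.erase x := Finset.mem_erase.2 ⟨hxy.symm, hy⟩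
  obtain ⟨z, hz⟩ := Finset.card_eq_one.1 <| show ((l.erase x).erase y).card = 1 by
    rw [Finset.card_erase_of_mem hy', Finset.card_erase_of_mem hx, hL.card_eq l hl]
  refine ⟨z, ?_⟩
  rwa [← hz, Finset.insert_erase hy', Finset.insert_erase hx]

theorem centralMap_eq (h : ({x, y, z} : Finset P) ∈ L) : centralMap L x y = z := by
  have hex : ∃ z, ({x, y, z} : Finset P) ∈ L := ⟨z, h⟩
  rw [centralMap, dif_pos hex]
  exact hL.eq_of_line_of_line hex.choose_spec h

theorem centralMap_self : centralMap L x x = x :=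
  dif_neg fun ⟨_, hz⟩ => (hL.ne_of_line hz).1 rfl

theorem line_centralMap (h : Collinear' L x y) (hxy : x ≠ y) :
    ({x, y, centralMap L x y} : Finset P) ∈ L := by
  obtain ⟨z, hz⟩ := hL.exists_line_of_collinear' h hxy
  rwa [hL.centralMap_eq hz]

theorem isCentralMap_centralMap (x : P) : IsCentralMap L x (centralMap L x) :=
  ⟨hL.centralMap_self, fun _ _ h => centralMap_of_not_collinear' h,
    fun _ _ h => hL.centralMap_eq h⟩

theorem centralMap_involutive (x : P) : Function.Involutive (centralMap L x) := by
  intro y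
  by_cases hxy : x = y
  · rw [← hxy, hL.centralMap_self, hL.centralMap_self]
  by_cases h : Collinear' L x y
  · exact hL.centralMap_eq (line_swap₂₃ (hL.line_centralMap h hxy))
  · rw [centralMap_of_not_collinear' h, centralMap_of_not_collinear' h]

theorem eq_or_ne_of_lines {p r s r' s' : P} (hl : ({p, r, s} : Finset P) ∈ L)
    (hl' : ({p, r', s'} : Finset P) ∈ L) :
    (r' = r ∧ s' = s) ∨ (r' = s ∧ s' = r) ∨ (r' ≠ r ∧ r' ≠ s ∧ s' ≠ r ∧ s' ≠ s) := by
  by_cases h₁ : r' = r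
  · subst h₁; exact Or.inl ⟨rfl, hL.eq_of_line_of_line hl' hl⟩
  by_cases h₂ : r' = s
  · subst h₂; exact Or.inr (Or.inl ⟨rfl, hL.eq_of_line_of_line hl' (line_swap₂₃ hl)⟩)
  refine Or.inr (Or.inr ⟨h₁, h₂, ?_, ?_⟩) <;> rintro rfl
  · exact h₂ (hL.eq_of_line_of_line (line_swap₂₃ hl') hl)
  · exact h₁ (hL.eq_of_line_of_line (line_swap₂₃ hl') (line_swap₂₃ hl))

end IsPartialTripleSystem

end Geometry

namespace IsFischerSpace

variable {P : Type*} [DecidableEq P] {L : Set (Finset P)} {p q q' r s r' s' w w' : P}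
variable (hL : IsFischerSpace L)
include hL

theorem image_centralMap_mem (x : P) : ∀ l ∈ L, l.image (centralMap L x) ∈ L :=
  hL.image_mem x _ (hL.isCentralMap_centralMap x)

theorem collinear'_centralMap_iff {x y z : P} :
    Collinear' L (centralMap L x y) (centralMap L x z) ↔ Collinear' L y z := by
  refine ⟨fun h => ?_, collinear'_of_map (hL.image_centralMap_mem x)⟩
  have := collinear'_of_map (hL.image_centralMap_mem x) h
  rwa [hL.centralMap_involutive x y, hL.centralMap_involutive x z] at this

theorem line_centralMap_image {x u v w : P} (h : ({u, v, w} : Finset P) ∈ L) :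
    ({centralMap L x u, centralMap L x v, centralMap L x w} : Finset P) ∈ L :=
  line_map (hL.image_centralMap_mem x) h

theorem ne_of_lines (hl : ({p, r, s} : Finset P) ∈ L) (hm : ({r, r', w} : Finset P) ∈ L)
    (hr's : r' ≠ s) : w ≠ p := by
  rintro rfl
  exact hr's (hL.eq_of_line_of_line (line_rotate (line_rotate hm)) hl)

theorem not_collinear'_of_line (hq : ¬ Collinear' L p q) (hq' : ¬ Collinear' L p q')
    (h : ({q, q', w} : Finset P) ∈ L) : w ≠ p ∧ ¬ Collinear' L p w := by
  have hwp : w ≠ p := by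
    rintro rfl; exact hq (collinear'_comm.1 (collinear'_of_line (line_swap₂₃ h)))
  -- `t(p)` fixes `q` and `q'`, hence the line `{q, q', w}` and `w`; but it moves every `w ~ p`.
  refine ⟨hwp, fun hpw => ?_⟩
  have himg := hL.line_centralMap_image (x := p) h
  rw [centralMap_of_not_collinear' hq, centralMap_of_not_collinear' hq'] at himg
  exact (hL.ne_of_line (hL.line_centralMap hpw hwp.symm)).2.2
    (hL.eq_of_line_of_line h himg)

theorem line_centralMap_of_not_collinear' (hq : ¬ Collinear' L p q)
    (hl : ({p, r, s} : Finset P) ∈ L) (h : ({q, r, w} : Finset P) ∈ L) :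
    ({q, s, centralMap L p w} : Finset P) ∈ L ∧
      ({p, w, centralMap L p w} : Finset P) ∈ L := by
  have himg := hL.line_centralMap_image (x := p) h
  rw [centralMap_of_not_collinear' hq, hL.centralMap_eq hl] at himg
  refine ⟨himg, hL.line_centralMap ?_ ?_⟩
  · by_contra hpw
    rw [centralMap_of_not_collinear' hpw] at himg
    exact (hL.ne_of_line hl).2.2
      (hL.eq_of_line_of_line (line_swap₂₃ h) (line_swap₂₃ himg))
  · rintro rfl; exact hq (collinear'_comm.1 (collinear'_of_line (line_swap₂₃ h)))

theorem collinear'_or_collinear' (hl : ({p, r, s} : Finset P) ∈ L)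
    (hl' : ({p, r', s'} : Finset P) ∈ L) : Collinear' L r r' ∨ Collinear' L r s' := by
  -- Otherwise `t(r)` maps the line `{p, r', s'}` onto `{s, r', s'}`.
  by_contra! h
  have himg := hL.line_centralMap_image (x := r) hl'
  rw [hL.centralMap_eq (line_swap₁₂ hl), centralMap_of_not_collinear' h.1,
    centralMap_of_not_collinear' h.2] at himg
  exact (hL.ne_of_line hl).2.1 (hL.eq_of_line_of_line (line_rotate hl') (line_rotate himg))

theorem line_of_not_collinear' (hl : ({p, r, s} : Finset P) ∈ L)
    (hl' : ({p, r', s'} : Finset P) ∈ L) (hm : ({r, r', w} : Finset P) ∈ L)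
    (hrs' : ¬ Collinear' L r s') (hr's : r' ≠ s) :
    w ≠ p ∧ ¬ Collinear' L p w ∧ ({s, s', w} : Finset P) ∈ L := by
  have hwp := hL.ne_of_lines hl hm hr's
  have himg := hL.line_centralMap_image (x := p) hm
  rw [hL.centralMap_eq hl, hL.centralMap_eq hl'] at himg
  -- If `w ~ p`, then `t(s')` maps `{p, r, s}` onto `{r', r, t(p) w}`, so `t(p) w = w`.
  have hpw : ¬ Collinear' L p w := by
    intro hpw
    have himg' := hL.line_centralMap_image (x := s') hl
    rw [hL.centralMap_eq (line_rotate (line_rotate hl')),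
      centralMap_of_not_collinear' (mt collinear'_comm.1 hrs'),
      hL.centralMap_eq (line_swap₁₂ himg)] at himg'
    exact (hL.ne_of_line (hL.line_centralMap hpw hwp.symm)).2.2
      (hL.eq_of_line_of_line hm (line_swap₁₂ himg'))
  rw [centralMap_of_not_collinear' hpw] at himg
  exact ⟨hwp, hpw, himg⟩

theorem collinear'_of_lines (hl : ({p, r, s} : Finset P) ∈ L)
    (hl' : ({p, r', s'} : Finset P) ∈ L) (hm : ({r, r', w} : Finset P) ∈ L)
    (hm' : ({r, s', w'} : Finset P) ∈ L) : Collinear' L p w := by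
  -- If `w ⊥ p`, then `t(w)` maps `{p, r, s}` onto `{p, r', w'}`, so `w' = s'`.
  by_contra hpw
  have himg := hL.line_centralMap_image (x := r) hl'
  rw [hL.centralMap_eq (line_swap₁₂ hl), hL.centralMap_eq hm, hL.centralMap_eq hm'] at himg
  have himg' := hL.line_centralMap_image (x := w) hl
  rw [centralMap_of_not_collinear' (mt collinear'_comm.1 hpw),
    hL.centralMap_eq (line_rotate (line_rotate hm)),
    hL.centralMap_eq (line_swap₁₂ himg)] at himg'
  exact (hL.ne_of_line hm').2.2 (hL.eq_of_line_of_line himg' hl').symm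

end IsFischerSpace

section Algebra

variable {R A B : Type*} [CommSemiring R] [NonUnitalNonAssocSemiring A] [Module R A]
  [SMulCommClass R A A] [IsScalarTower R A A]

theorem Submodule.mul_mem_of_mem_span {s t : Set A} {N : Submodule R A}
    (h : ∀ x ∈ s, ∀ y ∈ t, x * y ∈ N) {x y : A} (hx : x ∈ span R s) (hy : y ∈ span R t) :
    x * y ∈ N := by
  have : map₂ (LinearMap.mul R A) (span R s) (span R t) ≤ N := by
    rw [map₂_span_span, span_le]
    rintro _ ⟨x, hx, y, hy, rfl⟩
    exact h x hx y hy
  exact this (apply_mem_map₂ _ hx hy)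

theorem NonUnitalAlgebra.adjoin_eq_top_of_span_eq_top {s : Set A}
    (h : Submodule.span R s = ⊤) : adjoin R s = ⊤ := by
  refine NonUnitalAlgebra.eq_top_iff.2 fun x => ?_
  have : x ∈ Submodule.span R s := h ▸ Submodule.mem_top
  exact Submodule.span_le.2 (subset_adjoin R) this

theorem Module.Basis.map_mul_of_forall [NonUnitalNonAssocSemiring B] [Module R B]
    [SMulCommClass R B B] [IsScalarTower R B B] {ι : Type*} (b : Module.Basis ι R A)
    (f : A →ₗ[R] B) (h : ∀ i j, f (b i * b j) = f (b i) * f (b j)) (x y : A) :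
    f (x * y) = f x * f y :=
  LinearMap.congr_fun₂ (LinearMap.ext_basis b b (B := (LinearMap.mul R A).compr₂ f)
    (B' := (LinearMap.mul R B).compl₁₂ f f) h) x y

end Algebra

theorem eq_of_le_of_le_of_sup_eq_top {α : Type*} [Lattice α] [BoundedOrder α]
    [IsModularLattice α] {a b c d : α} (hac : a ≤ c) (hbd : b ≤ d) (hab : a ⊔ b = ⊤)
    (hcd : Disjoint c d) : a = c := by
  have h := sup_inf_assoc_of_le b hac
  rwa [hab, top_inf_eq, ((hcd.symm.mono_left hbd).eq_bot), sup_bot_eq, eq_comm] at h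

theorem Submodule.exists_add_add_of_sup_eq_top {R M : Type*} [Semiring R] [AddCommMonoid M]
    [Module R M] {A B C : Submodule R M} (h : A ⊔ B ⊔ C = ⊤) (y : M) :
    ∃ u ∈ A, ∃ v ∈ B, ∃ w ∈ C, u + v + w = y := by
  obtain ⟨uv, huv, w, hw, rfl⟩ := mem_sup.1 (h ▸ mem_top : y ∈ A ⊔ B ⊔ C)
  obtain ⟨u, hu, v, hv, rfl⟩ := mem_sup.1 huv
  exact ⟨u, hu, v, hv, w, hw, rfl⟩

section Eigenspaces

variable {F M : Type*} [Field F] [NonUnitalNonAssocCommRing M] [Module F M]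
  [SMulCommClass F M M] {x y u v w u' v' w' : M} {μ η : F}

theorem mem_eigSp : y ∈ eigSp F x μ ↔ x * y = μ • y := Iff.rfl

theorem eq_zero_of_mem_eigSp_of_add_add_eq_zero (hη0 : η ≠ 0) (hη1 : η ≠ 1)
    (hu : u ∈ eigSp F x 1) (hv : v ∈ eigSp F x 0) (hw : w ∈ eigSp F x η) (h : u + v + w = 0) :
    u = 0 ∧ v = 0 ∧ w = 0 := by
  rw [mem_eigSp, one_smul] at hu
  rw [mem_eigSp, zero_smul] at hv
  rw [mem_eigSp] at hw
  have h₁ : u + η • w = 0 := by simpa [mul_add, hu, hv, hw] using congrArg (x * ·) h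
  have h₂ : u + (η * η) • w = 0 := by
    simpa [mul_add, mul_smul_comm, hu, hw, smul_smul] using congrArg (x * ·) h₁
  have hw0 : w = 0 := by
    have : (η * (η - 1)) • w = 0 := by linear_combination (norm := module) h₂ - h₁
    exact (smul_eq_zero.1 this).resolve_left (mul_ne_zero hη0 (sub_ne_zero.2 hη1))
  subst hw0
  obtain rfl : u = 0 := by simpa using h₁
  exact ⟨rfl, by simpa using h, rfl⟩

theorem eigSp_decomposition_unique (hη0 : η ≠ 0) (hη1 : η ≠ 1)
    (hu : u ∈ eigSp F x 1) (hv : v ∈ eigSp F x 0) (hw : w ∈ eigSp F x η)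
    (hu' : u' ∈ eigSp F x 1) (hv' : v' ∈ eigSp F x 0) (hw' : w' ∈ eigSp F x η)
    (h : u + v + w = u' + v' + w') : u = u' ∧ v = v' ∧ w = w' := by
  have := eq_zero_of_mem_eigSp_of_add_add_eq_zero hη0 hη1 (sub_mem hu hu') (sub_mem hv hv')
    (sub_mem hw hw') (by rw [← sub_eq_zero] at h; rw [← h]; abel)
  simpa only [sub_eq_zero] using this

variable {A B C : Submodule F M}

theorem eigSp_eq_of_sup_eq_top (hη0 : η ≠ 0) (hη1 : η ≠ 1) (hA : A ≤ eigSp F x 1)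
    (hB : B ≤ eigSp F x 0) (hC : C ≤ eigSp F x η) (htop : A ⊔ B ⊔ C = ⊤) :
    eigSp F x 1 = A ∧ eigSp F x 0 = B ∧ eigSp F x η = C := by
  refine ⟨le_antisymm (fun y hy => ?_) hA, le_antisymm (fun y hy => ?_) hB,
    le_antisymm (fun y hy => ?_) hC⟩ <;>
  obtain ⟨u, hu, v, hv, w, hw, rfl⟩ := Submodule.exists_add_add_of_sup_eq_top htop y
  · obtain ⟨-, rfl, rfl⟩ := eigSp_decomposition_unique hη0 hη1 (hA hu) (hB hv) (hC hw) hy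
      (zero_mem _) (zero_mem _) (by simp)
    simpa using hu
  · obtain ⟨rfl, -, rfl⟩ := eigSp_decomposition_unique hη0 hη1 (hA hu) (hB hv) (hC hw)
      (zero_mem _) hy (zero_mem _) (by simp)
    simpa using hv
  · obtain ⟨rfl, rfl, -⟩ := eigSp_decomposition_unique hη0 hη1 (hA hu) (hB hv) (hC hw)
      (zero_mem _) (zero_mem _) hy (by simp)
    simpa using hw

theorem existsUnique_eigSp_decomposition (hη0 : η ≠ 0) (hη1 : η ≠ 1)
    (htop : eigSp F x 1 ⊔ eigSp F x 0 ⊔ eigSp F x η = ⊤) (y : M) :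
    ∃! t : M × M × M, t.1 ∈ eigSp F x 1 ∧ t.2.1 ∈ eigSp F x 0 ∧ t.2.2 ∈ eigSp F x η ∧
      y = t.1 + t.2.1 + t.2.2 := by
  obtain ⟨u, hu, v, hv, w, hw, rfl⟩ := Submodule.exists_add_add_of_sup_eq_top htop y
  refine ⟨(u, v, w), ⟨hu, hv, hw, rfl⟩, ?_⟩
  rintro ⟨u', v', w'⟩ ⟨hu', hv', hw', h⟩
  obtain ⟨rfl, rfl, rfl⟩ := eigSp_decomposition_unique hη0 hη1 hu' hv' hw' hu hv hw h.symm
  rfl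

end Eigenspaces

namespace Module.End

variable {F M : Type*} [Field F] [NonUnitalNonAssocRing M] [Module F M] [SMulCommClass F M M]
  [IsScalarTower F M M] {f : Module.End F M}

theorem mul_mem_eigenspace_of_map_mul (hf : ∀ x y, f (x * y) = f x * f y) {μ ν : F} {x y : M}
    (hx : x ∈ f.eigenspace μ) (hy : y ∈ f.eigenspace ν) : x * y ∈ f.eigenspace (μ * ν) := by
  rw [mem_eigenspace_iff] at *
  rw [hf, hx, hy, smul_mul_smul_comm]

theorem eigenspace_one_neg_one_grading (hf : ∀ x y, f (x * y) = f x * f y) :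
    (∀ y ∈ f.eigenspace 1, ∀ z ∈ f.eigenspace 1, y * z ∈ f.eigenspace 1) ∧
    (∀ y ∈ f.eigenspace 1, ∀ z ∈ f.eigenspace (-1), y * z ∈ f.eigenspace (-1)) ∧
    (∀ y ∈ f.eigenspace (-1), ∀ z ∈ f.eigenspace (-1), y * z ∈ f.eigenspace 1) := by
  refine ⟨fun y hy z hz => ?_, fun y hy z hz => ?_, fun y hy z hz => ?_⟩
  · simpa only [mul_one] using mul_mem_eigenspace_of_map_mul hf hy hz
  · simpa only [one_mul] using mul_mem_eigenspace_of_map_mul hf hy hz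
  · simpa only [mul_neg, mul_one, neg_neg] using mul_mem_eigenspace_of_map_mul hf hy hz

end Module.End

section Matsuo

variable {F P M : Type*} [Field F] [DecidableEq P] [NonUnitalNonAssocCommRing M] [Module F M]

structure IsMatsuoFamily (L : Set (Finset P)) (η : F) (a : P → M) : Prop where
  mul_self : ∀ p, a p * a p = a p
  mul_eq_zero : ∀ p q, p ≠ q → ¬ Collinear' L p q → a p * a q = 0
  mul_eq_of_line : ∀ p r s, ({p, r, s} : Finset P) ∈ L → a p * a r = (η / 2) • (a p + a r - a s)

def zeroGenerators (L : Set (Finset P)) (η : F) (a : P → M) (p : P) : Set M :=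
  {x | ∃ q, q ≠ p ∧ ¬ Collinear' L p q ∧ x = a q} ∪
    {x | ∃ r s, ({p, r, s} : Finset P) ∈ L ∧ x = a r + a s - η • a p}

def etaGenerators (L : Set (Finset P)) (a : P → M) (p : P) : Set M :=
  {x | ∃ r s, ({p, r, s} : Finset P) ∈ L ∧ x = a r - a s}

variable {L : Set (Finset P)} {η : F} {a : P → M} {p q q' r s r' s' : P}

theorem mem_span_zeroGenerators_of_not_collinear' (hq : q ≠ p) (hpq : ¬ Collinear' L p q) :
    a q ∈ Submodule.span F (zeroGenerators L η a p) :=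
  Submodule.subset_span (Or.inl ⟨q, hq, hpq, rfl⟩)

theorem line_mem_span_zeroGenerators (hl : ({p, r, s} : Finset P) ∈ L) :
    a r + a s - η • a p ∈ Submodule.span F (zeroGenerators L η a p) :=
  Submodule.subset_span (Or.inr ⟨r, s, hl, rfl⟩)

theorem span_sup_span_sup_span_eq_top (hL : IsPartialTripleSystem L) (h2 : (2 : F) ≠ 0)
    (hspan : Submodule.span F (Set.range a) = ⊤) (p : P) :
    Submodule.span F {a p} ⊔ Submodule.span F (zeroGenerators L η a p) ⊔
      Submodule.span F (etaGenerators L a p) = ⊤ := by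
  rw [eq_top_iff, ← hspan, Submodule.span_le]
  rintro _ ⟨q, rfl⟩
  obtain rfl | hqp := eq_or_ne q p
  · exact Submodule.mem_sup_left (Submodule.mem_sup_left (Submodule.mem_span_singleton_self _))
  by_cases hpq : Collinear' L p q
  · have hl := hL.line_centralMap hpq (Ne.symm hqp)
    have : a q = (η / 2) • a p + (2⁻¹ : F) • (a q + a (centralMap L p q) - η • a p)
        + (2⁻¹ : F) • (a q - a (centralMap L p q)) := by
      match_scalars <;> field_simp <;> ring
    rw [SetLike.mem_coe, this]
    exact add_mem (add_mem (Submodule.mem_sup_left (Submodule.mem_sup_left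
      (Submodule.smul_mem _ _ (Submodule.mem_span_singleton_self _))))
      (Submodule.mem_sup_left (Submodule.mem_sup_right
        (Submodule.smul_mem _ _ (line_mem_span_zeroGenerators hl)))))
      (Submodule.mem_sup_right (Submodule.smul_mem _ _ (Submodule.subset_span ⟨_, _, hl, rfl⟩)))
  · exact Submodule.mem_sup_left (Submodule.mem_sup_right
      (mem_span_zeroGenerators_of_not_collinear' hqp hpq))

namespace IsMatsuoFamily

variable (ha : IsMatsuoFamily L η a)
include ha

theorem mul_add_of_line (h2 : (2 : F) ≠ 0) (hl : ({p, r, s} : Finset P) ∈ L) :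
    a p * (a r + a s) = η • a p := by
  rw [mul_add, ha.mul_eq_of_line p r s hl, ha.mul_eq_of_line p s r (line_swap₂₃ hl)]
  match_scalars <;> field_simp <;> ring

theorem mul_mem_of_not_collinear' (hL : IsFischerSpace L) (hq : q ≠ p)
    (hpq : ¬ Collinear' L p q) (hq' : q' ≠ p) (hpq' : ¬ Collinear' L p q') :
    a q * a q' ∈ Submodule.span F (zeroGenerators L η a p) := by
  obtain rfl | hqq' := eq_or_ne q q'
  · rw [ha.mul_self]
    exact mem_span_zeroGenerators_of_not_collinear' hq hpq
  by_cases hc : Collinear' L q q'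
  · have hm := hL.line_centralMap hc hqq'
    obtain ⟨hw, hpw⟩ := hL.not_collinear'_of_line hpq hpq' hm
    rw [ha.mul_eq_of_line _ _ _ hm]
    exact Submodule.smul_mem _ _ (sub_mem (add_mem
      (mem_span_zeroGenerators_of_not_collinear' hq hpq)
      (mem_span_zeroGenerators_of_not_collinear' hq' hpq'))
      (mem_span_zeroGenerators_of_not_collinear' hw hpw))
  · rw [ha.mul_eq_zero q q' hqq' hc]
    exact zero_mem _

variable [SMulCommClass F M M]

theorem mem_eigSp_one_self : a p ∈ eigSp F (a p) 1 := by
  rw [mem_eigSp, one_smul, ha.mul_self]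

theorem mem_eigSp_zero_of_not_collinear' (hq : q ≠ p) (hpq : ¬ Collinear' L p q) :
    a q ∈ eigSp F (a p) 0 := by
  rw [mem_eigSp, zero_smul, ha.mul_eq_zero p q (Ne.symm hq) hpq]

theorem line_mem_eigSp_zero (h2 : (2 : F) ≠ 0) (hl : ({p, r, s} : Finset P) ∈ L) :
    a r + a s - η • a p ∈ eigSp F (a p) 0 := by
  rw [mem_eigSp, zero_smul, mul_sub, ha.mul_add_of_line h2 hl, mul_smul_comm, ha.mul_self,
    sub_self]

theorem line_mem_eigSp_eta (h2 : (2 : F) ≠ 0) (hl : ({p, r, s} : Finset P) ∈ L) :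
    a r - a s ∈ eigSp F (a p) η := by
  rw [mem_eigSp, mul_sub, ha.mul_eq_of_line p r s hl, ha.mul_eq_of_line p s r (line_swap₂₃ hl)]
  match_scalars <;> field_simp <;> ring

theorem span_zeroGenerators_le (h2 : (2 : F) ≠ 0) :
    Submodule.span F (zeroGenerators L η a p) ≤ eigSp F (a p) 0 := by
  rw [Submodule.span_le]
  rintro _ (⟨q, hq, hpq, rfl⟩ | ⟨r, s, hl, rfl⟩)
  · exact ha.mem_eigSp_zero_of_not_collinear' hq hpq
  · exact ha.line_mem_eigSp_zero h2 hl

theorem span_etaGenerators_le (h2 : (2 : F) ≠ 0) :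
    Submodule.span F (etaGenerators L a p) ≤ eigSp F (a p) η := by
  rw [Submodule.span_le]
  rintro _ ⟨r, s, hl, rfl⟩
  exact ha.line_mem_eigSp_eta h2 hl

theorem eigSp_eq_span (hL : IsPartialTripleSystem L) (h2 : (2 : F) ≠ 0) (hη0 : η ≠ 0)
    (hη1 : η ≠ 1) (hspan : Submodule.span F (Set.range a) = ⊤) (p : P) :
    eigSp F (a p) 1 = Submodule.span F {a p} ∧
      eigSp F (a p) 0 = Submodule.span F (zeroGenerators L η a p) ∧
      eigSp F (a p) η = Submodule.span F (etaGenerators L a p) :=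
  eigSp_eq_of_sup_eq_top hη0 hη1
    (Submodule.span_le.2 (Set.singleton_subset_iff.2 ha.mem_eigSp_one_self))
    (ha.span_zeroGenerators_le h2) (ha.span_etaGenerators_le h2)
    (span_sup_span_sup_span_eq_top hL h2 hspan p)

theorem mul_line_mem (hL : IsFischerSpace L) (h2 : (2 : F) ≠ 0) (hq : q ≠ p)
    (hpq : ¬ Collinear' L p q) (hl : ({p, r, s} : Finset P) ∈ L) :
    a q * (a r + a s - η • a p) ∈ Submodule.span F (zeroGenerators L η a p) := by
  have hqp : a q * a p = 0 := ha.mul_eq_zero q p hq (mt collinear'_comm.1 hpq)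
  have hqr : q ≠ r := by rintro rfl; exact hpq (collinear'_of_line hl)
  by_cases hc : Collinear' L q r
  · set w := centralMap L q r
    have hm := hL.line_centralMap hc hqr
    obtain ⟨hm', hn⟩ := hL.line_centralMap_of_not_collinear' hpq hl hm
    have : a q * (a r + a s - η • a p) = η • a q + (η / 2) • (a r + a s - η • a p)
        - (η / 2) • (a w + a (centralMap L p w) - η • a p) := by
      rw [mul_sub, mul_add, mul_smul_comm, hqp, ha.mul_eq_of_line _ _ _ hm,
        ha.mul_eq_of_line _ _ _ hm']
      match_scalars <;> field_simp <;> ring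
    rw [this]
    exact sub_mem (add_mem
      (Submodule.smul_mem _ _ (mem_span_zeroGenerators_of_not_collinear' hq hpq))
      (Submodule.smul_mem _ _ (line_mem_span_zeroGenerators hl)))
      (Submodule.smul_mem _ _ (line_mem_span_zeroGenerators hn))
  · have hc' : ¬ Collinear' L q s := by
      rwa [← hL.collinear'_centralMap_iff (x := p), centralMap_of_not_collinear' hpq,
        hL.centralMap_eq (line_swap₂₃ hl)]
    have hqs : q ≠ s := by rintro rfl; exact hpq (collinear'_of_line (line_swap₂₃ hl))
    rw [mul_sub, mul_add, mul_smul_comm, hqp, ha.mul_eq_zero q r hqr hc,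
      ha.mul_eq_zero q s hqs hc', smul_zero, add_zero, sub_zero]
    exact zero_mem _

variable [IsScalarTower F M M]

theorem line_mul_line (h2 : (2 : F) ≠ 0) (hl : ({p, r, s} : Finset P) ∈ L)
    (hl' : ({p, r', s'} : Finset P) ∈ L) :
    (a r + a s - η • a p) * (a r' + a s' - η • a p) =
      (a r + a s) * (a r' + a s') - (η * η) • a p := by
  simp only [sub_mul, mul_sub, mul_smul_comm, smul_mul_assoc]
  rw [mul_comm (a r + a s) (a p), ha.mul_add_of_line h2 hl, ha.mul_add_of_line h2 hl', ha.mul_self]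
  module

theorem line_mul_self_mem (h2 : (2 : F) ≠ 0) (hl : ({p, r, s} : Finset P) ∈ L) :
    (a r + a s - η • a p) * (a r + a s - η • a p) ∈ Submodule.span F (zeroGenerators L η a p) := by
  have : (a r + a s - η • a p) * (a r + a s - η • a p) = (1 + η) • (a r + a s - η • a p) := by
    rw [ha.line_mul_line h2 hl hl, add_mul, mul_add, mul_add, ha.mul_self, ha.mul_self,
      ha.mul_eq_of_line _ _ _ (line_rotate hl),
      ha.mul_eq_of_line _ _ _ (line_swap₁₂ (line_rotate hl))]
    match_scalars <;> field_simp <;> ring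
  rw [this]
  exact Submodule.smul_mem _ _ (line_mem_span_zeroGenerators hl)

theorem line_mul_line_mem_of_not_collinear' (hL : IsFischerSpace L) (h2 : (2 : F) ≠ 0)
    (hl : ({p, r, s} : Finset P) ∈ L) (hl' : ({p, r', s'} : Finset P) ∈ L) (hrr' : r ≠ r')
    (hr's : r' ≠ s) (hc : Collinear' L r r') (hnc : ¬ Collinear' L r s') :
    (a r + a s - η • a p) * (a r' + a s' - η • a p) ∈
      Submodule.span F (zeroGenerators L η a p) := by
  set w := centralMap L r r'
  have hm := hL.line_centralMap hc hrr'
  obtain ⟨hw, hpw, hm'⟩ := hL.line_of_not_collinear' hl hl' hm hnc hr's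
  have hnc' : ¬ Collinear' L s r' := by
    rwa [← hL.collinear'_centralMap_iff (x := p), hL.centralMap_eq (line_swap₂₃ hl),
      hL.centralMap_eq hl']
  have hrs' : r ≠ s' := by rintro rfl; exact hnc ⟨_, hl, by simp, by simp⟩
  have hsr' : s ≠ r' := by rintro rfl; exact hnc' ⟨_, hl, by simp, by simp⟩
  have : (a r + a s - η • a p) * (a r' + a s' - η • a p)
      = (η / 2) • ((a r + a s - η • a p) + (a r' + a s' - η • a p)) - η • a w := by
    rw [ha.line_mul_line h2 hl hl', add_mul, mul_add, mul_add, ha.mul_eq_of_line _ _ _ hm,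
      ha.mul_eq_zero r s' hrs' hnc, ha.mul_eq_zero s r' hsr' hnc', ha.mul_eq_of_line _ _ _ hm']
    match_scalars <;> field_simp <;> ring
  rw [this]
  exact sub_mem (Submodule.smul_mem _ _ (add_mem (line_mem_span_zeroGenerators hl)
    (line_mem_span_zeroGenerators hl')))
    (Submodule.smul_mem _ _ (mem_span_zeroGenerators_of_not_collinear' hw hpw))

theorem line_mul_line_mem_of_collinear' (hL : IsFischerSpace L) (h2 : (2 : F) ≠ 0)
    (hl : ({p, r, s} : Finset P) ∈ L) (hl' : ({p, r', s'} : Finset P) ∈ L) (hrr' : r ≠ r')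
    (hrs' : r ≠ s') (hr's : r' ≠ s) (hs's : s' ≠ s) (hc : Collinear' L r r')
    (hc' : Collinear' L r s') :
    (a r + a s - η • a p) * (a r' + a s' - η • a p) ∈
      Submodule.span F (zeroGenerators L η a p) := by
  set w := centralMap L r r'
  set w' := centralMap L r s'
  have hm := hL.line_centralMap hc hrr'
  have hm' := hL.line_centralMap hc' hrs'
  have hn := hL.line_centralMap (hL.collinear'_of_lines hl hl' hm hm')
    (hL.ne_of_lines hl hm hr's).symm
  have hn' := hL.line_centralMap (hL.collinear'_of_lines hl (line_swap₂₃ hl') hm' hm)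
    (hL.ne_of_lines hl hm' hs's).symm
  have hk := hL.line_centralMap_image (x := p) hm
  rw [hL.centralMap_eq hl, hL.centralMap_eq hl'] at hk
  have hk' := hL.line_centralMap_image (x := p) hm'
  rw [hL.centralMap_eq hl, hL.centralMap_eq (line_swap₂₃ hl')] at hk'
  have : (a r + a s - η • a p) * (a r' + a s' - η • a p)
      = η • ((a r + a s - η • a p) + (a r' + a s' - η • a p))
        - (η / 2) • ((a w + a (centralMap L p w) - η • a p)
          + (a w' + a (centralMap L p w') - η • a p)) := by
    rw [ha.line_mul_line h2 hl hl', add_mul, mul_add, mul_add, ha.mul_eq_of_line _ _ _ hm,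
      ha.mul_eq_of_line _ _ _ hm', ha.mul_eq_of_line _ _ _ hk', ha.mul_eq_of_line _ _ _ hk]
    match_scalars <;> field_simp <;> ring
  rw [this]
  exact sub_mem (Submodule.smul_mem _ _ (add_mem (line_mem_span_zeroGenerators hl)
    (line_mem_span_zeroGenerators hl')))
    (Submodule.smul_mem _ _ (add_mem (line_mem_span_zeroGenerators hn)
      (line_mem_span_zeroGenerators hn')))

theorem line_mul_line_mem (hL : IsFischerSpace L) (h2 : (2 : F) ≠ 0)
    (hl : ({p, r, s} : Finset P) ∈ L) (hl' : ({p, r', s'} : Finset P) ∈ L) :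
    (a r + a s - η • a p) * (a r' + a s' - η • a p) ∈
      Submodule.span F (zeroGenerators L η a p) := by
  rcases hL.eq_or_ne_of_lines hl hl' with ⟨rfl, rfl⟩ | ⟨rfl, rfl⟩ | ⟨hr'r, hr's, hs'r, hs's⟩
  · exact ha.line_mul_self_mem h2 hl
  · rw [add_comm (a r')]
    exact ha.line_mul_self_mem h2 hl
  rcases hL.collinear'_or_collinear' hl hl' with hc | hc
  · by_cases hc' : Collinear' L r s'
    · exact ha.line_mul_line_mem_of_collinear' hL h2 hl hl' hr'r.symm hs'r.symm hr's hs's hc hc'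
    · exact ha.line_mul_line_mem_of_not_collinear' hL h2 hl hl' hr'r.symm hr's hc hc'
  · by_cases hc' : Collinear' L r r'
    · exact ha.line_mul_line_mem_of_collinear' hL h2 hl hl' hr'r.symm hs'r.symm hr's hs's hc' hc
    · rw [add_comm (a r')]
      exact ha.line_mul_line_mem_of_not_collinear' hL h2 hl (line_swap₂₃ hl') hs'r.symm hs's hc hc'

theorem mul_mem_span_zeroGenerators (hL : IsFischerSpace L) (h2 : (2 : F) ≠ 0) {x y : M}
    (hx : x ∈ zeroGenerators L η a p) (hy : y ∈ zeroGenerators L η a p) :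
    x * y ∈ Submodule.span F (zeroGenerators L η a p) := by
  rcases hx with ⟨q, hq, hpq, rfl⟩ | ⟨r, s, hl, rfl⟩ <;>
    rcases hy with ⟨q', hq', hpq', rfl⟩ | ⟨r', s', hl', rfl⟩
  · exact ha.mul_mem_of_not_collinear' hL hq hpq hq' hpq'
  · exact ha.mul_line_mem hL h2 hq hpq hl'
  · rw [mul_comm]
    exact ha.mul_line_mem hL h2 hq' hpq' hl
  · exact ha.line_mul_line_mem hL h2 hl hl'

theorem mul_mem_span_zeroGenerators_of_mem_span (hL : IsFischerSpace L) (h2 : (2 : F) ≠ 0)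
    {x y : M} (hx : x ∈ Submodule.span F (zeroGenerators L η a p))
    (hy : y ∈ Submodule.span F (zeroGenerators L η a p)) :
    x * y ∈ Submodule.span F (zeroGenerators L η a p) :=
  Submodule.mul_mem_of_mem_span (fun _ hx _ hy => ha.mul_mem_span_zeroGenerators hL h2 hx hy)
    hx hy

end IsMatsuoFamily

end Matsuo

section CentralAutomorphism

variable {F P M : Type*} [Field F] [DecidableEq P] [NonUnitalNonAssocCommRing M] [Module F M]
  {L : Set (Finset P)} {η : F} {a : Module.Basis P F M}

theorem span_eq_eigenspace_constr_centralMap (hL : IsFischerSpace L) (h2 : (2 : F) ≠ 0) (p : P) :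
    Submodule.span F {a p} ⊔ Submodule.span F (zeroGenerators L η a p) =
        Module.End.eigenspace (a.constr F (a ∘ centralMap L p)) 1 ∧
      Submodule.span F (etaGenerators L a p) =
        Module.End.eigenspace (a.constr F (a ∘ centralMap L p)) (-1) := by
  set τ : Module.End F M := a.constr F (a ∘ centralMap L p)
  have hτ : ∀ q, τ (a q) = a (centralMap L p q) := a.constr_basis F _
  have hplus : Submodule.span F {a p} ⊔ Submodule.span F (zeroGenerators L η a p) ≤
      τ.eigenspace 1 := by
    refine sup_le (Submodule.span_le.2 ?_) (Submodule.span_le.2 ?_)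
    · rintro _ rfl
      rw [SetLike.mem_coe, Module.End.mem_eigenspace_iff, one_smul, hτ, hL.centralMap_self]
    rintro _ (⟨q, -, hpq, rfl⟩ | ⟨r, s, hl, rfl⟩) <;>
      rw [SetLike.mem_coe, Module.End.mem_eigenspace_iff, one_smul]
    · rw [hτ, centralMap_of_not_collinear' hpq]
    · rw [map_sub, map_add, map_smul, hτ, hτ, hτ, hL.centralMap_eq hl,
        hL.centralMap_eq (line_swap₂₃ hl), hL.centralMap_self, add_comm]
  have hminus : Submodule.span F (etaGenerators L a p) ≤ τ.eigenspace (-1) := by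
    rw [Submodule.span_le]
    rintro _ ⟨r, s, hl, rfl⟩
    rw [SetLike.mem_coe, Module.End.mem_eigenspace_iff, map_sub, hτ, hτ, hL.centralMap_eq hl,
      hL.centralMap_eq (line_swap₂₃ hl), neg_one_smul, neg_sub]
  have hdisj : Disjoint (τ.eigenspace 1) (τ.eigenspace (-1)) :=
    Module.End.disjoint_genEigenspace τ (fun h => h2 (by linear_combination h)) 1 1
  have htop := span_sup_span_sup_span_eq_top (η := η) hL.toIsPartialTripleSystem
    h2 a.span_eq p
  exact ⟨eq_of_le_of_le_of_sup_eq_top hplus hminus htop hdisj,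
    eq_of_le_of_le_of_sup_eq_top hminus hplus (by rwa [sup_comm]) hdisj.symm⟩

variable [SMulCommClass F M M] [IsScalarTower F M M]

theorem IsMatsuoFamily.constr_map_mul (ha : IsMatsuoFamily L η a) (hL : IsPartialTripleSystem L)
    {σ : P → P} (hσ : Function.Involutive σ) (hσL : ∀ l ∈ L, l.image σ ∈ L) (x y : M) :
    a.constr F (a ∘ σ) (x * y) = a.constr F (a ∘ σ) x * a.constr F (a ∘ σ) y := by
  refine a.map_mul_of_forall _ (fun q r => ?_) x y
  simp only [Module.Basis.constr_basis, Function.comp_apply]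
  obtain rfl | hqr := eq_or_ne q r
  · rw [ha.mul_self, ha.mul_self, Module.Basis.constr_basis, Function.comp_apply]
  by_cases hc : Collinear' L q r
  · obtain ⟨s, hl⟩ := hL.exists_line_of_collinear' hc hqr
    rw [ha.mul_eq_of_line q r s hl, ha.mul_eq_of_line _ _ _ (line_map hσL hl)]
    simp only [map_smul, map_sub, map_add, Module.Basis.constr_basis, Function.comp_apply]
  · have hc' : ¬ Collinear' L (σ q) (σ r) := fun h => hc (by
      simpa only [hσ _] using collinear'_of_map hσL h)
    rw [ha.mul_eq_zero q r hqr hc, ha.mul_eq_zero _ _ (hσ.injective.ne hqr) hc', map_zero]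

end CentralAutomorphism

/-- Let `Π = (P, L)` be a partial triple system which is a Fischer space
(every central map sends lines to lines).  Then in the Matsuo algebra
`M = M(Π, η/2, F)` — the free `F`-module on `P`, with basis `(a_p)`, where
`a_p·a_p = a_p`, `a_p·a_q = 0` for distinct non-collinear `p, q`, and
`a_p·a_r = (η/2)•(a_p + a_r − a_s)` for each line `{p, r, s}` — every `a_p` is a
primitive axis of Jordan type `η`; consequently `M` is a primitive axial algebra of
Jordan type `η` generated by the axes `{a_p : p ∈ P}`. -/
theorem matsuo_algebra_of_fischer_space_is_jordan_type
    {F P M : Type*} [Field F] [DecidableEq P] [NonUnitalNonAssocCommRing M] [Module F M]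
    [SMulCommClass F M M] [IsScalarTower F M M]
    (h2 : (2 : F) ≠ 0) (η : F) (hη0 : η ≠ 0) (hη1 : η ≠ 1)
    (L : Set (Finset P))
    (hcard : ∀ l ∈ L, l.card = 3)
    (hunique : ∀ l₁ ∈ L, ∀ l₂ ∈ L, ∀ p q : P,
      p ≠ q → p ∈ l₁ → q ∈ l₁ → p ∈ l₂ → q ∈ l₂ → l₁ = l₂)
    (hfischer : ∀ (x : P) (t : P → P), IsCentralMap L x t → ∀ l ∈ L, l.image t ∈ L)
    (a : Module.Basis P F M)
    (hidem : ∀ p : P, a p * a p = a p)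
    (hperp : ∀ p q : P, p ≠ q → ¬ Collinear' L p q → a p * a q = 0)
    (hline : ∀ p r s : P, ({p, r, s} : Finset P) ∈ L →
      a p * a r = (η / 2) • (a p + a r - a s)) :
    (∀ p : P,
      a p * a p = a p ∧
      (∀ x : M, ∃! t : M × M × M, t.1 ∈ eigSp F (a p) (1 : F) ∧
        t.2.1 ∈ eigSp F (a p) (0 : F) ∧ t.2.2 ∈ eigSp F (a p) η ∧
        x = t.1 + t.2.1 + t.2.2) ∧
      eigSp F (a p) (1 : F) = Submodule.span F {a p} ∧
      (∀ y ∈ eigSp F (a p) (0 : F), ∀ z ∈ eigSp F (a p) (0 : F),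
        y * z ∈ eigSp F (a p) (0 : F)) ∧
      (∀ y ∈ eigSp F (a p) (1 : F) ⊔ eigSp F (a p) (0 : F),
       ∀ z ∈ eigSp F (a p) (1 : F) ⊔ eigSp F (a p) (0 : F),
        y * z ∈ eigSp F (a p) (1 : F) ⊔ eigSp F (a p) (0 : F)) ∧
      (∀ y ∈ eigSp F (a p) (1 : F) ⊔ eigSp F (a p) (0 : F),
       ∀ z ∈ eigSp F (a p) η, y * z ∈ eigSp F (a p) η) ∧
      (∀ y ∈ eigSp F (a p) η, ∀ z ∈ eigSp F (a p) η,
        y * z ∈ eigSp F (a p) (1 : F) ⊔ eigSp F (a p) (0 : F))) ∧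
    NonUnitalAlgebra.adjoin F (Set.range a) = ⊤ := by
  have hL : IsFischerSpace L := ⟨⟨hcard, hunique⟩, hfischer⟩
  have ha : IsMatsuoFamily L η a := ⟨hidem, hperp, hline⟩
  refine ⟨fun p => ?_, NonUnitalAlgebra.adjoin_eq_top_of_span_eq_top a.span_eq⟩
  obtain ⟨h1, h0, hη⟩ := ha.eigSp_eq_span hL.toIsPartialTripleSystem h2 hη0 hη1 a.span_eq p
  have htop : eigSp F (a p) 1 ⊔ eigSp F (a p) 0 ⊔ eigSp F (a p) η = ⊤ := by
    rw [h1, h0, hη]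
    exact span_sup_span_sup_span_eq_top hL.toIsPartialTripleSystem h2 a.span_eq p
  obtain ⟨hplus, hminus⟩ := span_eq_eigenspace_constr_centralMap (η := η) (a := a) hL h2 p
  rw [← h1, ← h0] at hplus
  rw [← hη] at hminus
  refine ⟨hidem p, existsUnique_eigSp_decomposition hη0 hη1 htop, h1, ?_, ?_⟩
  · rw [h0]
    exact fun y hy z hz => ha.mul_mem_span_zeroGenerators_of_mem_span hL h2 hy hz
  · rw [hplus, hminus]
    exact Module.End.eigenspace_one_neg_one_grading (ha.constr_map_mul hL.toIsPartialTripleSystem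
      (hL.centralMap_involutive p) (hL.image_centralMap_mem p))
end

section
/- Let ⟨·,·⟩ be the symmetric F-bilinear form on the Matsuo algebra M = M(Π, η/2, F) determined by ⟨a_p, a_p⟩ = 1 for all p ∈ P, ⟨a_p, a_q⟩ = 0 for distinct non-collinear p, q, and ⟨a_p, a_q⟩ = η/2 for collinear p, q. Then ⟨·,·⟩ is associative (⟨u·v, w⟩ = ⟨u, v·w⟩ for all u, v, w ∈ M) if and only if both: (i) for every x ∈ P, the set x^⊥ is a subspace of Π; and (ii) for every line {x, y, z} ∈ L and every line ℓ ∈ L with x ∈ ℓ, one has ℓ ∩ y^⊥ = ∅ if and only if ℓ ∩ z^⊥ = ∅. -/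
/-- `y` lies in `x^⊥`: it is distinct from `x` and not collinear with `x`. -/
def Perp {P : Type*} (L : Set (Finset P)) (x y : P) : Prop :=
  y ≠ x ∧ ¬ Collinear' L x y

open Module

theorem Module.Basis.forall_apply_mul_eq_iff {ι R M N : Type*} [CommSemiring R]
    [NonUnitalNonAssocSemiring M] [Module R M] [SMulCommClass R M M] [IsScalarTower R M M]
    [AddCommMonoid N] [Module R N] (b : Basis ι R M) (B : M →ₗ[R] M →ₗ[R] N) :
    (∀ u v w, B (u * v) w = B u (v * w)) ↔
      ∀ i j k, B (b i * b j) (b k) = B (b i) (b j * b k) := by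
  refine ⟨fun h i j k => h _ _ _, fun h u v w => ?_⟩
  have hk : ∀ i j, B (b i * b j) = (B (b i)).comp (LinearMap.mul R M (b j)) :=
    fun i j => b.ext fun k => h i j k
  have hj : ∀ i, (B.flip w).comp (LinearMap.mul R M (b i)) =
      (B (b i)).comp ((LinearMap.mul R M).flip w) :=
    fun i => b.ext fun j => by simpa using LinearMap.congr_fun (hk i j) w
  have hi : (B.flip w).comp ((LinearMap.mul R M).flip v) = B.flip (v * w) :=
    b.ext fun i => by simpa [mul_comm] using LinearMap.congr_fun (hj i) v
  simpa using LinearMap.congr_fun hi u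

theorem LinearMap.BilinForm.IsSymm.assoc_reverse {R M : Type*}
    [CommSemiring R] [NonUnitalNonAssocCommSemiring M] [Module R M] {B : LinearMap.BilinForm R M}
    (hB : B.IsSymm) {u v w : M} (h : B (u * v) w = B u (v * w)) :
    B (w * v) u = B w (v * u) := by
  rw [hB.eq (w * v), mul_comm w v, ← h, hB.eq, mul_comm]

section TripleSystem

variable {P : Type*} {L : Set (Finset P)}

theorem collinear'_comm_s19 {p q : P} : Collinear' L p q ↔ Collinear' L q p :=
  ⟨fun ⟨l, hl, hp, hq⟩ => ⟨l, hl, hq, hp⟩, fun ⟨l, hl, hq, hp⟩ => ⟨l, hl, hp, hq⟩⟩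

theorem collinear'_of_mem {l : Finset P} (hl : l ∈ L) {p q : P} (hp : p ∈ l) (hq : q ∈ l) :
    Collinear' L p q :=
  ⟨l, hl, hp, hq⟩

theorem Perp.symm {x y : P} (h : Perp L x y) : Perp L y x :=
  ⟨h.1.symm, fun hc => h.2 (collinear'_comm_s19.1 hc)⟩

variable [DecidableEq P]

structure IsPartialTripleSystem_s19 (L : Set (Finset P)) : Prop where
  card_eq_three : ∀ l ∈ L, l.card = 3
  eq_of_mem : ∀ l₁ ∈ L, ∀ l₂ ∈ L, ∀ p q : P,
    p ≠ q → p ∈ l₁ → q ∈ l₁ → p ∈ l₂ → q ∈ l₂ → l₁ = l₂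

def PerpIsSubspace (L : Set (Finset P)) : Prop :=
  ∀ x : P, ∀ l ∈ L, ∀ p q : P, p ≠ q → p ∈ l → q ∈ l →
    Perp L x p → Perp L x q → ∀ r ∈ l, Perp L x r

def PerpMeetIff (L : Set (Finset P)) : Prop :=
  ∀ x y z : P, ({x, y, z} : Finset P) ∈ L → ∀ l ∈ L, x ∈ l →
    ((∀ w ∈ l, ¬ Perp L y w) ↔ (∀ w ∈ l, ¬ Perp L z w))

namespace IsPartialTripleSystem_s19

theorem ne_of_mem (hL : IsPartialTripleSystem_s19 L) {p q r : P}
    (h : ({p, q, r} : Finset P) ∈ L) : p ≠ q ∧ p ≠ r ∧ q ≠ r := by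
  have := hL.card_eq_three _ h
  refine ⟨?_, ?_, ?_⟩ <;> rintro rfl <;> simp only [Finset.insert_eq_self.2, Finset.mem_insert,
    Finset.mem_singleton, or_true, Finset.pair_comm] at this <;>
    exact absurd this (Finset.card_le_two.trans_lt (by norm_num)).ne

theorem exists_eq_insert (hL : IsPartialTripleSystem_s19 L) {l : Finset P} (hl : l ∈ L) {p q : P}
    (hp : p ∈ l) (hq : q ∈ l) (hpq : p ≠ q) : ∃ s, l = {p, q, s} := by
  have hq' : q ∈ l.erase p := Finset.mem_erase.2 ⟨hpq.symm, hq⟩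
  have hcard : ((l.erase p).erase q).card = 1 := by
    rw [Finset.card_erase_of_mem hq', Finset.card_erase_of_mem hp, hL.card_eq_three l hl]
  obtain ⟨s, hs⟩ := Finset.card_eq_one.1 hcard
  exact ⟨s, by rw [← hs, Finset.insert_erase hq', Finset.insert_erase hp]⟩

theorem exists_mem_of_collinear' (hL : IsPartialTripleSystem_s19 L) {p q : P}
    (h : Collinear' L p q) (hpq : p ≠ q) : ∃ s, ({p, q, s} : Finset P) ∈ L := by
  obtain ⟨l, hl, hp, hq⟩ := h
  obtain ⟨s, rfl⟩ := hL.exists_eq_insert hl hp hq hpq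
  exact ⟨s, hl⟩

theorem eq_of_insert_mem (hL : IsPartialTripleSystem_s19 L) {p q s t : P}
    (hs : ({p, q, s} : Finset P) ∈ L) (ht : ({p, q, t} : Finset P) ∈ L) : s = t := by
  obtain ⟨hpq, hps, hqs⟩ := hL.ne_of_mem hs
  have hst : s ∈ ({p, q, t} : Finset P) :=
    hL.eq_of_mem _ hs _ ht p q hpq (by simp) (by simp) (by simp) (by simp) ▸ (by simp)
  simp only [Finset.mem_insert, Finset.mem_singleton] at hst
  exact (hst.resolve_left hps.symm).resolve_left hqs.symm

end IsPartialTripleSystem_s19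

theorem collinear'_of_mem_of_collinear' (hL : IsPartialTripleSystem_s19 L) (hi : PerpIsSubspace L)
    (hii : PerpMeetIff L) {p q s r t : P} (h₁ : ({p, q, s} : Finset P) ∈ L)
    (h₂ : ({q, r, t} : Finset P) ∈ L) (htp : t ≠ p) (hsr : Collinear' L s r) :
    Collinear' L p t := by
  obtain ⟨-, hps, -⟩ := hL.ne_of_mem h₁
  by_contra hpt
  -- By (ii) for `{q, p, s}`, the line `{q, r, t}` meets `s^⊥` since it meets `p^⊥` in `t`. It can
  -- only do so in `t`, and then the subspace `t^⊥` contains `p` and `s`, hence `q`.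
  obtain ⟨w, hw, hsw⟩ : ∃ w ∈ ({q, r, t} : Finset P), Perp L s w := by
    by_contra! h
    exact (hii q p s (by rwa [Finset.insert_comm]) _ h₂ (by simp) |>.2 h) t (by simp) ⟨htp, hpt⟩
  have hst : Perp L s t := by
    simp only [Finset.mem_insert, Finset.mem_singleton] at hw
    rcases hw with rfl | rfl | rfl
    · exact absurd (collinear'_of_mem h₁ (by simp) (by simp)) hsw.2
    · exact absurd hsr hsw.2
    · exact hsw
  exact (hi t _ h₁ p s hps (by simp) (by simp) (Perp.symm ⟨htp, hpt⟩) hst.symm q (by simp)).2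
    (collinear'_of_mem h₂ (by simp) (by simp))

end TripleSystem

section Matsuo

variable {P F M : Type*} [DecidableEq P] [Field F] [NonUnitalNonAssocCommRing M] [Module F M]
  {L : Set (Finset P)} {c : F} {a : Basis P F M} {B : M →ₗ[F] M →ₗ[F] F}

structure IsMatsuoBasis (L : Set (Finset P)) (c : F) (a : Basis P F M) : Prop where
  mul_self : ∀ p, a p * a p = a p
  mul_eq_zero : ∀ p q, p ≠ q → ¬ Collinear' L p q → a p * a q = 0
  mul_of_mem : ∀ p r s, ({p, r, s} : Finset P) ∈ L → a p * a r = c • (a p + a r - a s)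

structure IsMatsuoForm (L : Set (Finset P)) (c : F) (a : Basis P F M)
    (B : M →ₗ[F] M →ₗ[F] F) : Prop where
  apply_self : ∀ p, B (a p) (a p) = 1
  apply_eq_zero : ∀ p q, p ≠ q → ¬ Collinear' L p q → B (a p) (a q) = 0
  apply_of_collinear' : ∀ p q, p ≠ q → Collinear' L p q → B (a p) (a q) = c

theorem IsMatsuoBasis.apply_mul_of_mem (ha : IsMatsuoBasis L c a) (B : M →ₗ[F] M →ₗ[F] F)
    {p q s : P} (h : ({p, q, s} : Finset P) ∈ L) (w : M) :
    B (a p * a q) w = c * (B (a p) w + B (a q) w - B (a s) w) := by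
  rw [ha.mul_of_mem p q s h]
  simp only [map_smul, map_sub, map_add, LinearMap.smul_apply, LinearMap.sub_apply,
    LinearMap.add_apply, smul_eq_mul]

theorem IsMatsuoBasis.apply_apply_mul_of_mem (ha : IsMatsuoBasis L c a)
    (B : M →ₗ[F] M →ₗ[F] F) {q r t : P} (h : ({q, r, t} : Finset P) ∈ L) (u : M) :
    B u (a q * a r) = c * (B u (a q) + B u (a r) - B u (a t)) := by
  rw [ha.mul_of_mem q r t h]
  simp only [map_smul, map_sub, map_add, smul_eq_mul]

namespace IsMatsuoForm

theorem apply_eq_apply (hB : IsMatsuoForm L c a B) {p q r s : P} (h₁ : p = q ↔ r = s)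
    (h₂ : Collinear' L p q ↔ Collinear' L r s) : B (a p) (a q) = B (a r) (a s) := by
  by_cases hpq : p = q
  · rw [hpq, h₁.1 hpq, hB.apply_self, hB.apply_self]
  have hrs := mt h₁.2 hpq
  by_cases hcol : Collinear' L p q
  · rw [hB.apply_of_collinear' p q hpq hcol, hB.apply_of_collinear' r s hrs (h₂.1 hcol)]
  · rw [hB.apply_eq_zero p q hpq hcol, hB.apply_eq_zero r s hrs (mt h₂.2 hcol)]

theorem isSymm (hB : IsMatsuoForm L c a B) : LinearMap.BilinForm.IsSymm B :=
  (LinearMap.BilinForm.isSymm_iff_basis a).2 fun _ _ =>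
    hB.apply_eq_apply eq_comm collinear'_comm_s19

theorem apply_eq_zero_iff (hB : IsMatsuoForm L c a B) (hc : c ≠ 0) {p q : P} :
    B (a p) (a q) = 0 ↔ Perp L p q := by
  by_cases hqp : q = p
  · simp [hqp, hB.apply_self, Perp]
  by_cases hcol : Collinear' L p q
  · simp [hB.apply_of_collinear' p q (Ne.symm hqp) hcol, hc, Perp, hcol]
  · simp [hB.apply_eq_zero p q (Ne.symm hqp) hcol, Perp, hqp, hcol]

theorem assoc_basis_self (hB : IsMatsuoForm L c a B) (ha : IsMatsuoBasis L c a)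
    (hL : IsPartialTripleSystem_s19 L) (p r : P) :
    B (a p * a p) (a r) = B (a p) (a p * a r) := by
  rw [ha.mul_self]
  by_cases hrp : r = p
  · rw [hrp, ha.mul_self]
  by_cases hcol : Collinear' L p r
  · obtain ⟨s, hs⟩ := hL.exists_mem_of_collinear' hcol (Ne.symm hrp)
    obtain ⟨-, hps, -⟩ := hL.ne_of_mem hs
    rw [ha.apply_apply_mul_of_mem B hs, hB.apply_self,
      hB.apply_of_collinear' p r (Ne.symm hrp) hcol,
      hB.apply_of_collinear' p s hps (collinear'_of_mem hs (by simp) (by simp))]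
    ring
  · rw [ha.mul_eq_zero p r (Ne.symm hrp) hcol, hB.apply_eq_zero p r (Ne.symm hrp) hcol,
      map_zero]

theorem assoc_basis_of_perp (hB : IsMatsuoForm L c a B) (ha : IsMatsuoBasis L c a)
    (hL : IsPartialTripleSystem_s19 L)
    (hA : ∀ p q r t : P, Perp L p q → ({q, r, t} : Finset P) ∈ L →
      B (a p) (a r) = B (a p) (a t))
    {p q : P} (hpq : Perp L p q) (r : P) :
    B (a p * a q) (a r) = B (a p) (a q * a r) := by
  have hBpq := hB.apply_eq_zero p q hpq.1.symm hpq.2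
  rw [ha.mul_eq_zero p q hpq.1.symm hpq.2, map_zero, LinearMap.zero_apply]
  by_cases hrq : r = q
  · rw [hrq, ha.mul_self, hBpq]
  by_cases hcol : Collinear' L q r
  · obtain ⟨t, ht⟩ := hL.exists_mem_of_collinear' hcol (Ne.symm hrq)
    rw [ha.apply_apply_mul_of_mem B ht, hBpq, hA p q r t hpq ht]
    ring
  · rw [ha.mul_eq_zero q r (Ne.symm hrq) hcol, map_zero]

theorem assoc_basis (hB : IsMatsuoForm L c a B) (ha : IsMatsuoBasis L c a)
    (hL : IsPartialTripleSystem_s19 L)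
    (hA : ∀ p q r t : P, Perp L p q → ({q, r, t} : Finset P) ∈ L →
      B (a p) (a r) = B (a p) (a t))
    (hA' : ∀ p q s r t : P, ({p, q, s} : Finset P) ∈ L → ({q, r, t} : Finset P) ∈ L →
      B (a s) (a r) = B (a p) (a t))
    (p q r : P) : B (a p * a q) (a r) = B (a p) (a q * a r) := by
  have hsymm := hB.isSymm
  by_cases hpq : p = q
  · rw [hpq]; exact hB.assoc_basis_self ha hL q r
  by_cases hqr : q = r
  · rw [hqr]; exact hsymm.assoc_reverse (hB.assoc_basis_self ha hL r p)
  by_cases hcpq : Collinear' L p q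
  swap
  · exact hB.assoc_basis_of_perp ha hL hA ⟨Ne.symm hpq, hcpq⟩ r
  by_cases hcqr : Collinear' L q r
  swap
  · exact hsymm.assoc_reverse
      (hB.assoc_basis_of_perp ha hL hA ⟨hqr, fun h => hcqr (collinear'_comm_s19.1 h)⟩ p)
  obtain ⟨s, hs⟩ := hL.exists_mem_of_collinear' hcpq hpq
  obtain ⟨t, ht⟩ := hL.exists_mem_of_collinear' hcqr hqr
  rw [ha.apply_mul_of_mem B hs, ha.apply_apply_mul_of_mem B ht, hA' p q s r t hs ht,
    hB.apply_of_collinear' q r hqr hcqr, hB.apply_of_collinear' p q hpq hcpq]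
  ring

theorem apply_eq_of_perp_of_assoc (hB : IsMatsuoForm L c a B) (ha : IsMatsuoBasis L c a)
    (hc : c ≠ 0) (h : ∀ p q r : P, B (a p * a q) (a r) = B (a p) (a q * a r))
    {p q r t : P} (hpq : Perp L p q) (ht : ({q, r, t} : Finset P) ∈ L) :
    B (a p) (a r) = B (a p) (a t) := by
  have hpqr := h p q r
  rw [ha.mul_eq_zero p q hpq.1.symm hpq.2, ha.apply_apply_mul_of_mem B ht,
    hB.apply_eq_zero p q hpq.1.symm hpq.2, map_zero, LinearMap.zero_apply, zero_add,
    eq_comm, mul_eq_zero, sub_eq_zero] at hpqr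
  exact hpqr.resolve_left hc

theorem apply_eq_of_mem_of_assoc (hB : IsMatsuoForm L c a B) (ha : IsMatsuoBasis L c a)
    (hL : IsPartialTripleSystem_s19 L) (hc : c ≠ 0)
    (h : ∀ p q r : P, B (a p * a q) (a r) = B (a p) (a q * a r))
    {p q s r t : P} (hs : ({p, q, s} : Finset P) ∈ L) (ht : ({q, r, t} : Finset P) ∈ L) :
    B (a s) (a r) = B (a p) (a t) := by
  have hpqr := h p q r
  rw [ha.apply_mul_of_mem B hs, ha.apply_apply_mul_of_mem B ht,
    hB.apply_of_collinear' q r (hL.ne_of_mem ht).1 (collinear'_of_mem ht (by simp) (by simp)),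
    hB.apply_of_collinear' p q (hL.ne_of_mem hs).1 (collinear'_of_mem hs (by simp) (by simp))]
    at hpqr
  linear_combination -mul_left_cancel₀ hc hpqr

theorem assoc_basis_iff (hB : IsMatsuoForm L c a B) (ha : IsMatsuoBasis L c a)
    (hL : IsPartialTripleSystem_s19 L) (hc : c ≠ 0) :
    (∀ p q r : P, B (a p * a q) (a r) = B (a p) (a q * a r)) ↔
      (∀ p q r t : P, Perp L p q → ({q, r, t} : Finset P) ∈ L →
        B (a p) (a r) = B (a p) (a t)) ∧
      (∀ p q s r t : P, ({p, q, s} : Finset P) ∈ L → ({q, r, t} : Finset P) ∈ L →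
        B (a s) (a r) = B (a p) (a t)) :=
  ⟨fun h => ⟨fun _ _ _ _ => hB.apply_eq_of_perp_of_assoc ha hc h,
      fun _ _ _ _ _ => hB.apply_eq_of_mem_of_assoc ha hL hc h⟩,
    fun ⟨hA, hA'⟩ => hB.assoc_basis ha hL hA hA'⟩

theorem perpIsSubspace_iff (hB : IsMatsuoForm L c a B) (hL : IsPartialTripleSystem_s19 L)
    (hc : c ≠ 0) :
    PerpIsSubspace L ↔ ∀ p q r t : P, Perp L p q → ({q, r, t} : Finset P) ∈ L →
      B (a p) (a r) = B (a p) (a t) := by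
  constructor
  · intro hi p q r t hpq ht
    obtain ⟨hqr, hqt, -⟩ := hL.ne_of_mem ht
    have hrp : r ≠ p := by rintro rfl; exact hpq.2 (collinear'_of_mem ht (by simp) (by simp))
    have htp : t ≠ p := by rintro rfl; exact hpq.2 (collinear'_of_mem ht (by simp) (by simp))
    refine hB.apply_eq_apply (iff_of_false hrp.symm htp.symm) ⟨fun hpr => ?_, fun hpt => ?_⟩
    · by_contra hpt
      exact (hi p _ ht q t hqt (by simp) (by simp) hpq ⟨htp, hpt⟩ r (by simp)).2 hpr
    · by_contra hpr
      exact (hi p _ ht q r hqr (by simp) (by simp) hpq ⟨hrp, hpr⟩ t (by simp)).2 hpt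
  · intro hA x l hl p q hpq hp hq hxp hxq r hr
    obtain ⟨s, rfl⟩ := hL.exists_eq_insert hl hp hq hpq
    simp only [Finset.mem_insert, Finset.mem_singleton] at hr
    rcases hr with rfl | rfl | rfl
    · exact hxp
    · exact hxq
    · rw [← hB.apply_eq_zero_iff hc] at hxq ⊢
      rwa [hA x p r q hxp (by rwa [Finset.pair_comm])]

theorem perpMeetIff (hB : IsMatsuoForm L c a B) (hL : IsPartialTripleSystem_s19 L) (hc : c ≠ 0)
    (hA' : ∀ p q s r t : P, ({p, q, s} : Finset P) ∈ L → ({q, r, t} : Finset P) ∈ L →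
      B (a s) (a r) = B (a p) (a t)) :
    PerpMeetIff L := by
  intro x y z hxyz l hl hx
  suffices key : ∀ y z : P, ({x, y, z} : Finset P) ∈ L →
      (∀ w ∈ l, ¬ Perp L y w) → ∀ w ∈ l, ¬ Perp L z w from
    ⟨key y z hxyz, key z y (by rwa [Finset.pair_comm])⟩
  intro y z hxyz hy w hw hzw
  have hwx : w ≠ x := by
    rintro rfl; exact hzw.2 (collinear'_of_mem hxyz (by simp) (by simp))
  obtain ⟨w', rfl⟩ := hL.exists_eq_insert hl hx hw hwx.symm
  have h := hA' w x w' y z (by rwa [Finset.insert_comm]) hxyz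
  rw [(hB.apply_eq_zero_iff hc).2 hzw.symm, hB.apply_eq_zero_iff hc] at h
  exact hy w' (by simp) h.symm

theorem apply_eq_of_mem (hB : IsMatsuoForm L c a B) (hL : IsPartialTripleSystem_s19 L)
    (hi : PerpIsSubspace L) (hii : PerpMeetIff L) {p q s r t : P}
    (hs : ({p, q, s} : Finset P) ∈ L) (ht : ({q, r, t} : Finset P) ∈ L) :
    B (a s) (a r) = B (a p) (a t) := by
  by_cases hrp : r = p
  · subst hrp
    rw [hL.eq_of_insert_mem (show ({q, r, s} : Finset P) ∈ L by rwa [Finset.insert_comm]) ht]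
    exact hB.isSymm.eq _ _
  by_cases hrs : r = s
  · subst hrs
    rw [← hL.eq_of_insert_mem
        (show ({q, r, p} : Finset P) ∈ L by rwa [Finset.pair_comm, Finset.insert_comm]) ht,
      hB.apply_self, hB.apply_self]
  have htp : t ≠ p := by
    rintro rfl
    exact hrs (hL.eq_of_insert_mem (show ({q, t, r} : Finset P) ∈ L by rwa [Finset.pair_comm])
      (show ({q, t, s} : Finset P) ∈ L by rwa [Finset.insert_comm]))
  refine hB.apply_eq_apply (iff_of_false (Ne.symm hrs) (Ne.symm htp))
    ⟨collinear'_of_mem_of_collinear' hL hi hii hs ht htp, ?_⟩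
  exact collinear'_of_mem_of_collinear' hL hi hii
    (show ({s, q, p} : Finset P) ∈ L by
      rwa [Finset.insert_comm, Finset.pair_comm, Finset.insert_comm])
    (show ({q, t, r} : Finset P) ∈ L by rwa [Finset.pair_comm]) hrs

end IsMatsuoForm

end Matsuo

theorem matsuo_algebra_frobenius_iff_general
    {F P M : Type*} [Field F] [DecidableEq P] [NonUnitalNonAssocCommRing M] [Module F M]
    [SMulCommClass F M M] [IsScalarTower F M M]
    (h2 : (2 : F) ≠ 0) (η : F) (hη0 : η ≠ 0)
    (L : Set (Finset P))
    (hcard : ∀ l ∈ L, l.card = 3)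
    (hunique : ∀ l₁ ∈ L, ∀ l₂ ∈ L, ∀ p q : P,
      p ≠ q → p ∈ l₁ → q ∈ l₁ → p ∈ l₂ → q ∈ l₂ → l₁ = l₂)
    (a : Module.Basis P F M)
    (hidem : ∀ p : P, a p * a p = a p)
    (hperp : ∀ p q : P, p ≠ q → ¬ Collinear' L p q → a p * a q = 0)
    (hline : ∀ p r s : P, ({p, r, s} : Finset P) ∈ L →
      a p * a r = (η / 2) • (a p + a r - a s))
    (B : M →ₗ[F] M →ₗ[F] F)
    (hB1 : ∀ p : P, B (a p) (a p) = 1)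
    (hB0 : ∀ p q : P, p ≠ q → ¬ Collinear' L p q → B (a p) (a q) = 0)
    (hBη : ∀ p q : P, p ≠ q → Collinear' L p q → B (a p) (a q) = η / 2) :
    (∀ u v w : M, B (u * v) w = B u (v * w)) ↔
      ((∀ x : P, ∀ l ∈ L, ∀ p q : P, p ≠ q → p ∈ l → q ∈ l →
          Perp L x p → Perp L x q → ∀ r ∈ l, Perp L x r) ∧
       (∀ x y z : P, ({x, y, z} : Finset P) ∈ L → ∀ l ∈ L, x ∈ l →
          ((∀ w ∈ l, ¬ Perp L y w) ↔ (∀ w ∈ l, ¬ Perp L z w)))) := by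
  have hc : η / 2 ≠ 0 := div_ne_zero hη0 h2
  have hL : IsPartialTripleSystem_s19 L := ⟨hcard, hunique⟩
  have ha : IsMatsuoBasis L (η / 2) a := ⟨hidem, hperp, hline⟩
  have hB : IsMatsuoForm L (η / 2) a B := ⟨hB1, hB0, hBη⟩
  change _ ↔ PerpIsSubspace L ∧ PerpMeetIff L
  rw [a.forall_apply_mul_eq_iff, hB.assoc_basis_iff ha hL hc]
  constructor
  · rintro ⟨hA, hA'⟩
    exact ⟨(hB.perpIsSubspace_iff hL hc).2 hA, hB.perpMeetIff hL hc hA'⟩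
  · rintro ⟨hi, hii⟩
    exact ⟨(hB.perpIsSubspace_iff hL hc).1 hi, fun _ _ _ _ _ => hB.apply_eq_of_mem hL hi hii⟩

/-- let `Π = (P, L)` be a partial triple system and `M = M(Π, η/2, F)` the
Matsuo algebra — the free `F`-module on `P`, with basis `(a_p)`, where `a_p·a_p = a_p`,
`a_p·a_q = 0` for distinct non-collinear `p, q`, and `a_p·a_r = (η/2)•(a_p + a_r − a_s)`
for each line `{p, r, s}`.  The symmetric bilinear form with `⟨a_p, a_p⟩ = 1`,
`⟨a_p, a_q⟩ = 0` for distinct non-collinear `p, q`, and `⟨a_p, a_q⟩ = η/2` for collinear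
`p, q` is associative iff (i) every `x^⊥` is a subspace of `Π`, and (ii) for every line
`{x, y, z}` and every line `ℓ` through `x`, `ℓ ∩ y^⊥ = ∅ ↔ ℓ ∩ z^⊥ = ∅`. -/
theorem matsuo_algebra_frobenius_iff
    {F P M : Type*} [Field F] [DecidableEq P] [NonUnitalNonAssocCommRing M] [Module F M]
    [SMulCommClass F M M] [IsScalarTower F M M]
    (h2 : (2 : F) ≠ 0) (η : F) (hη0 : η ≠ 0) (hη1 : η ≠ 1)
    (L : Set (Finset P))
    (hcard : ∀ l ∈ L, l.card = 3)
    (hunique : ∀ l₁ ∈ L, ∀ l₂ ∈ L, ∀ p q : P,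
      p ≠ q → p ∈ l₁ → q ∈ l₁ → p ∈ l₂ → q ∈ l₂ → l₁ = l₂)
    (a : Module.Basis P F M)
    (hidem : ∀ p : P, a p * a p = a p)
    (hperp : ∀ p q : P, p ≠ q → ¬ Collinear' L p q → a p * a q = 0)
    (hline : ∀ p r s : P, ({p, r, s} : Finset P) ∈ L →
      a p * a r = (η / 2) • (a p + a r - a s))
    (B : M →ₗ[F] M →ₗ[F] F)
    (hB1 : ∀ p : P, B (a p) (a p) = 1)
    (hB0 : ∀ p q : P, p ≠ q → ¬ Collinear' L p q → B (a p) (a q) = 0)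
    (hBη : ∀ p q : P, p ≠ q → Collinear' L p q → B (a p) (a q) = η / 2) :
    (∀ u v w : M, B (u * v) w = B u (v * w)) ↔
      ((∀ x : P, ∀ l ∈ L, ∀ p q : P, p ≠ q → p ∈ l → q ∈ l →
          Perp L x p → Perp L x q → ∀ r ∈ l, Perp L x r) ∧
       (∀ x y z : P, ({x, y, z} : Finset P) ∈ L → ∀ l ∈ L, x ∈ l →
          ((∀ w ∈ l, ¬ Perp L y w) ↔ (∀ w ∈ l, ¬ Perp L z w)))) :=
  matsuo_algebra_frobenius_iff_general h2 η hη0 L hcard hunique a hidem hperp hline B hB1 hB0 hBη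
end
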